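/- Let 𝒳, 𝒵 be finite types, Q a channel from 𝒳 to 𝒵, and p* a probability mass function on 𝒳; let I(p*;Q) denote the mutual information of the joint law p*(x)·Q(z|x) on 𝒳 × 𝒵. For each positive integer n, let T_n ⊆ 𝒳^n be the set of sequences x^n such that for every x ∈ 𝒳 the empirical relative frequency of x in x^n differs from p*(x) by at most n^{−1/4}. Then there exists a sequence f₁(n) → 0 (depending only on 𝒳, 𝒵, Q, p*) such that for every n and every random vector X^n on 𝒳^n, with Z^n the corresponding memoryless channel output (P(Z^n = z^n | X^n = x^n) = ∏_{i=1}^n Q(z_i | x_i)), one has (1/n)·I(X^n; Z^n) ≤ I(p*;Q) + P(X^n ∉ T_n)·log|𝒳| + f₁(n). -/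

import Mathlib

open scoped BigOperators

/-- Mutual information of a joint probability mass function `P` on `α × β`
(natural logarithm, with `0·log 0 = 0`). -/
noncomputable def miJoint {α β : Type} [Fintype α] [Fintype β] (P : α → β → ℝ) : ℝ :=
  ∑ x, ∑ y, P x y * Real.log (P x y / ((∑ y', P x y') * (∑ x', P x' y)))

/-- The set of `n^{-1/4}`-typical sequences for the distribution `pstar`: sequences
whose empirical relative frequencies are within `n^{-1/4}` of `pstar`. -/
def typicalSet {𝒳 : Type} [Fintype 𝒳] [DecidableEq 𝒳] (pstar : 𝒳 → ℝ) (n : ℕ) :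
    Set (Fin n → 𝒳) :=
  {xs | ∀ x : 𝒳,
    |((Finset.univ.filter fun i => xs i = x).card : ℝ) / n - pstar x| ≤
      (n : ℝ) ^ (-(1 / 4 : ℝ))}

/-!
Split the input law `μ` on `𝒳ⁿ` into its parts on the typical set `T` and off it: mutual
information is subadditive in the (unnormalized) input measure. On `T`, for any product law `Rⁿ`
on `𝒵ⁿ`, `I ≤ ∑ μ(xⁿ) D(Qⁿ(·|xⁿ) ‖ Rⁿ) + 1`, and
`D(Qⁿ(·|xⁿ) ‖ Rⁿ) = ∑ₐ N(a|xⁿ) D(Q(·|a) ‖ R) ≤ n ∑ₐ (p*(a) + n^{-1/4}) D(Q(·|a) ‖ R)`.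
Off `T`, `I` is at most the entropy of the input, `≤ P(Tᶜ) · n log |𝒳| + 1`.
Taking `R = (1 - δ) q* + δ · uniform` with `δ = n^{-1/4}`, where `q*` is the output law of `p*`,
keeps every `D(Q(·|a) ‖ R) ≤ log |𝒵| - log δ`, so `δ ∑ₐ D(Q(·|a) ‖ R) → 0`, while
`∑ₐ p*(a) D(Q(·|a) ‖ R) → I(p*; Q)` as `δ → 0`.
-/

open Real Finset Filter Topology

-- Junk (`P z / 0 = 0`) unless `0 < R`, which every lemma below assumes.
noncomputable def relEntropy {Z : Type} [Fintype Z] (P R : Z → ℝ) : ℝ :=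
  ∑ z, P z * log (P z / R z)

lemma sub_le_mul_log_div {a b : ℝ} (ha : 0 ≤ a) (hb : 0 < b) : a - b ≤ a * log (a / b) := by
  have h := mul_le_mul_of_nonneg_left (self_sub_one_le_mul_log (div_nonneg ha hb.le)) hb.le
  rwa [mul_sub, mul_div_cancel₀ _ hb.ne', mul_one, ← mul_assoc, mul_div_cancel₀ _ hb.ne'] at h

section RelEntropy

variable {Z : Type} [Fintype Z] {P R : Z → ℝ}

lemma relEntropy_nonneg (hP : ∀ z, 0 ≤ P z) (hR : ∀ z, 0 < R z) (h : ∑ z, R z ≤ ∑ z, P z) :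
    0 ≤ relEntropy P R := by
  have := sum_le_sum fun z (_ : z ∈ univ) => sub_le_mul_log_div (hP z) (hR z)
  rw [sum_sub_distrib] at this
  exact (sub_nonneg.mpr h).trans this

lemma relEntropy_le_neg_log {m : ℝ} (hP : ∀ z, 0 ≤ P z) (hP1 : ∑ z, P z = 1) (hm : 0 < m)
    (hR : ∀ z, m ≤ R z) : relEntropy P R ≤ -log m := by
  calc relEntropy P R ≤ ∑ z, P z * -log m := by
        refine sum_le_sum fun z _ => ?_
        rcases (hP z).eq_or_lt with h | h
        · simp [← h]
        have hPle : P z ≤ 1 := hP1 ▸ single_le_sum (fun w _ => hP w) (mem_univ z)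
        rw [← log_inv]
        have hRz := hm.trans_le (hR z)
        refine mul_le_mul_of_nonneg_left (log_le_log (by positivity) ?_) h.le
        calc P z / R z ≤ 1 / m := by gcongr; exact hR z
          _ = m⁻¹ := one_div m
    _ = -log m := by rw [← sum_mul, hP1, one_mul]

end RelEntropy

section MutualInformation

variable {X Z : Type} [Fintype X] [Fintype Z]

lemma miJoint_le_sum_negMulLog {P : X → Z → ℝ} (hP : ∀ x z, 0 ≤ P x z) :
    miJoint P ≤ ∑ x, negMulLog (∑ z, P x z) := by
  refine sum_le_sum fun x _ => ?_
  set r := ∑ z, P x z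
  calc ∑ z, P x z * log (P x z / (r * ∑ x', P x' z)) ≤ ∑ z, P x z * log r⁻¹ := by
        refine sum_le_sum fun z _ => ?_
        rcases (hP x z).eq_or_lt with h | h
        · simp [← h]
        have hrow : P x z ≤ r := single_le_sum (fun z' _ => hP x z') (mem_univ z)
        have hcol : P x z ≤ ∑ x', P x' z := single_le_sum (fun x' _ => hP x' z) (mem_univ x)
        have hr : 0 < r := h.trans_le hrow
        have hc : 0 < ∑ x', P x' z := h.trans_le hcol
        refine mul_le_mul_of_nonneg_left (log_le_log (by positivity) ?_) h.le
        calc P x z / (r * ∑ x', P x' z) = r⁻¹ * (P x z / ∑ x', P x' z) := by field_simp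
          _ ≤ r⁻¹ * 1 := by gcongr; exact div_le_one_of_le₀ hcol hc.le
          _ = r⁻¹ := mul_one _
    _ = negMulLog r := by rw [← sum_mul, log_inv, negMulLog]; ring

lemma miJoint_mul_channel (ν : X → ℝ) {W : X → Z → ℝ} (hW1 : ∀ x, ∑ z, W x z = 1) :
    miJoint (fun x z => ν x * W x z) =
      ∑ x, ∑ z, ν x * W x z * log (W x z / ∑ x', ν x' * W x' z) := by
  refine sum_congr rfl fun x _ => sum_congr rfl fun z _ => ?_
  rw [← mul_sum, hW1, mul_one]
  rcases eq_or_ne (ν x) 0 with h | h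
  · simp [h]
  · rw [mul_div_mul_left _ _ h]

variable {W : X → Z → ℝ}

lemma sum_mul_log_div_le_of_le {ν : X → ℝ} {c : Z → ℝ} (hν : ∀ x, 0 ≤ ν x)
    (hW : ∀ x z, 0 ≤ W x z) (hc : ∀ z, ∑ x, ν x * W x z ≤ c z) :
    ∑ x, ∑ z, ν x * W x z * log (W x z / c z) ≤
      ∑ x, ∑ z, ν x * W x z * log (W x z / ∑ x', ν x' * W x' z) := by
  refine sum_le_sum fun x _ => sum_le_sum fun z _ => ?_
  rcases (mul_nonneg (hν x) (hW x z)).eq_or_lt with h | h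
  · simp [← h]
  have hout : ν x * W x z ≤ ∑ x', ν x' * W x' z :=
    single_le_sum (fun x' _ => mul_nonneg (hν x') (hW x' z)) (mem_univ x)
  have hWpos : 0 < W x z := pos_of_mul_pos_right h (hν x)
  have hcpos : 0 < c z := (h.trans_le hout).trans_le (hc z)
  refine mul_le_mul_of_nonneg_left (log_le_log (by positivity) ?_) h.le
  exact div_le_div_of_nonneg_left hWpos.le (h.trans_le hout) (hc z)

lemma miJoint_add_mul_channel_le {ν₁ ν₂ : X → ℝ} (hν₁ : ∀ x, 0 ≤ ν₁ x) (hν₂ : ∀ x, 0 ≤ ν₂ x)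
    (hW : ∀ x z, 0 ≤ W x z) (hW1 : ∀ x, ∑ z, W x z = 1) :
    miJoint (fun x z => (ν₁ x + ν₂ x) * W x z) ≤
      miJoint (fun x z => ν₁ x * W x z) + miJoint (fun x z => ν₂ x * W x z) := by
  rw [miJoint_mul_channel _ hW1, miJoint_mul_channel _ hW1, miJoint_mul_channel _ hW1]
  simp only [add_mul, sum_add_distrib]
  refine add_le_add (sum_mul_log_div_le_of_le hν₁ hW fun z => ?_)
    (sum_mul_log_div_le_of_le hν₂ hW fun z => ?_)
  · exact le_add_of_nonneg_right (sum_nonneg fun x _ => mul_nonneg (hν₂ x) (hW x z))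
  · exact le_add_of_nonneg_left (sum_nonneg fun x _ => mul_nonneg (hν₁ x) (hW x z))

lemma miJoint_mul_channel_le {ν : X → ℝ} {R : Z → ℝ} (hν : ∀ x, 0 ≤ ν x)
    (hW : ∀ x z, 0 ≤ W x z) (hW1 : ∀ x, ∑ z, W x z = 1) (hR : ∀ z, 0 < R z) :
    miJoint (fun x z => ν x * W x z) ≤
      ∑ x, ν x * relEntropy (W x) R + (∑ z, R z - ∑ x, ν x) := by
  rw [miJoint_mul_channel _ hW1]
  set c : Z → ℝ := fun z => ∑ x, ν x * W x z
  have hc : ∀ z, 0 ≤ c z := fun z => sum_nonneg fun x _ => mul_nonneg (hν x) (hW x z)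
  have hterm : ∀ x z, ν x * W x z * log (W x z / c z) =
      ν x * W x z * log (W x z / R z) - ν x * W x z * log (c z / R z) := by
    intro x z
    rcases (mul_nonneg (hν x) (hW x z)).eq_or_lt with h | h
    · simp [← h]
    have hWpos : 0 < W x z := pos_of_mul_pos_right h (hν x)
    have hcpos : 0 < c z :=
      h.trans_le (single_le_sum (fun x' _ => mul_nonneg (hν x') (hW x' z)) (mem_univ x))
    rw [log_div hWpos.ne' hcpos.ne', log_div hWpos.ne' (hR z).ne',
      log_div hcpos.ne' (hR z).ne']
    ring
  have hmass : ∑ z, c z = ∑ x, ν x := by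
    simp only [c]
    rw [sum_comm]
    simp only [← mul_sum, hW1, mul_one]
  have hGibbs := sum_le_sum fun z (_ : z ∈ univ) => sub_le_mul_log_div (hc z) (hR z)
  rw [sum_sub_distrib, hmass] at hGibbs
  calc ∑ x, ∑ z, ν x * W x z * log (W x z / c z)
      = ∑ x, ν x * relEntropy (W x) R - ∑ z, c z * log (c z / R z) := by
        simp only [hterm, sum_sub_distrib, relEntropy, mul_sum, mul_assoc]
        congr 1
        rw [sum_comm]
        simp only [c, sum_mul, mul_assoc]
    _ ≤ ∑ x, ν x * relEntropy (W x) R + (∑ z, R z - ∑ x, ν x) := by linarith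

lemma sum_negMulLog_le [Nonempty X] {ν : X → ℝ} (hν : ∀ x, 0 ≤ ν x) :
    ∑ x, negMulLog (ν x) ≤ (∑ x, ν x) * log (Fintype.card X) + negMulLog (∑ x, ν x) := by
  set N : ℝ := (Fintype.card X : ℝ)
  have hN : 0 < N := by simp only [N]; exact_mod_cast Fintype.card_pos
  have hJensen := concaveOn_negMulLog.le_map_sum (t := univ) (w := fun _ => N⁻¹) (p := ν)
    (fun _ _ => by positivity) (by simp [N]) (fun x _ => hν x)
  simp only [smul_eq_mul, ← mul_sum] at hJensen
  have hNinv : negMulLog N⁻¹ = N⁻¹ * log N := by simp [negMulLog, log_inv]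
  rw [negMulLog_mul, hNinv] at hJensen
  calc ∑ x, negMulLog (ν x) = N * (N⁻¹ * ∑ x, negMulLog (ν x)) := by field_simp
    _ ≤ N * ((∑ x, ν x) * (N⁻¹ * log N) + N⁻¹ * negMulLog (∑ x, ν x)) := by gcongr
    _ = (∑ x, ν x) * log N + negMulLog (∑ x, ν x) := by field_simp

theorem miJoint_le_of_relEntropy_le_on [Nonempty X] {μ : X → ℝ} {W : X → Z → ℝ} {R : Z → ℝ}
    {T : Set X} {C : ℝ} (hμ : ∀ x, 0 ≤ μ x) (hμ1 : ∑ x, μ x = 1) (hW : ∀ x z, 0 ≤ W x z)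
    (hW1 : ∀ x, ∑ z, W x z = 1) (hR : ∀ z, 0 < R z) (hR1 : ∑ z, R z = 1) (hC : 0 ≤ C)
    (hT : ∀ x ∈ T, relEntropy (W x) R ≤ C) :
    miJoint (fun x z => μ x * W x z) ≤
      C + (∑ x, Tᶜ.indicator μ x) * log (Fintype.card X) + 2 := by
  set ν₁ := T.indicator μ
  set ν₂ := Tᶜ.indicator μ
  have hν₁ : ∀ x, 0 ≤ ν₁ x := Set.indicator_nonneg fun x _ => hμ x
  have hν₂ : ∀ x, 0 ≤ ν₂ x := Set.indicator_nonneg fun x _ => hμ x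
  have hsplit : ∀ x, μ x = ν₁ x + ν₂ x := fun x => (Set.indicator_self_add_compl_apply T μ x).symm
  have htyp : miJoint (fun x z => ν₁ x * W x z) ≤ C + 1 := by
    have hD : ∑ x, ν₁ x * relEntropy (W x) R ≤ (∑ x, ν₁ x) * C := by
      rw [sum_mul]
      refine sum_le_sum fun x _ => ?_
      by_cases hx : x ∈ T
      · simpa [ν₁, hx] using mul_le_mul_of_nonneg_left (hT x hx) (hμ x)
      · simp [ν₁, hx]
    have hmass : ∑ x, ν₁ x ≤ 1 :=
      hμ1 ▸ sum_le_sum fun x _ => Set.indicator_le_self' (fun x _ => hμ x) x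
    have := miJoint_mul_channel_le hν₁ hW hW1 hR
    nlinarith [sum_nonneg fun x (_ : x ∈ univ) => hν₁ x]
  have hatyp : miJoint (fun x z => ν₂ x * W x z) ≤
      (∑ x, ν₂ x) * log (Fintype.card X) + 1 := by
    calc miJoint (fun x z => ν₂ x * W x z) ≤ ∑ x, negMulLog (∑ z, ν₂ x * W x z) :=
          miJoint_le_sum_negMulLog fun x z => mul_nonneg (hν₂ x) (hW x z)
      _ = ∑ x, negMulLog (ν₂ x) := by simp only [← mul_sum, hW1, mul_one]
      _ ≤ (∑ x, ν₂ x) * log (Fintype.card X) + negMulLog (∑ x, ν₂ x) := sum_negMulLog_le hν₂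
      _ ≤ (∑ x, ν₂ x) * log (Fintype.card X) + 1 := by
          have := negMulLog_le_one_sub_self (sum_nonneg fun x (_ : x ∈ univ) => hν₂ x)
          linarith [sum_nonneg fun x (_ : x ∈ univ) => hν₂ x]
  simp only [hsplit]
  linarith [miJoint_add_mul_channel_le hν₁ hν₂ hW hW1]

end MutualInformation

section Product

variable {ι Z : Type} [Fintype ι] [DecidableEq ι] [Fintype Z] {g : ι → Z → ℝ}

lemma sum_prod_apply_eq_one (hg : ∀ i, ∑ w, g i w = 1) : ∑ z : ι → Z, ∏ i, g i (z i) = 1 := by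
  rw [← Fintype.prod_sum]
  simp [hg]

lemma sum_prod_apply_mul (hg : ∀ i, ∑ w, g i w = 1) (j : ι) (f : Z → ℝ) :
    ∑ z : ι → Z, (∏ i, g i (z i)) * f (z j) = ∑ w, g j w * f w := by
  have h : ∀ z : ι → Z,
      (∏ i, g i (z i)) * f (z j) = ∏ i, g i (z i) * (if i = j then f (z i) else 1) := by
    intro z
    rw [prod_mul_distrib, prod_ite_eq' univ j, if_pos (mem_univ j)]
  rw [sum_congr rfl fun z _ => h z,
    ← Fintype.prod_sum fun i w => g i w * if i = j then f w else 1,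
    prod_eq_single j (fun i _ hij => by simp [hij, hg]) (by simp)]
  simp

lemma relEntropy_pi {r : ι → Z → ℝ} (hg : ∀ i, ∑ w, g i w = 1) (hr : ∀ i w, 0 < r i w) :
    relEntropy (fun z : ι → Z => ∏ i, g i (z i)) (fun z => ∏ i, r i (z i)) =
      ∑ i, relEntropy (g i) (r i) := by
  have hlog : ∀ z : ι → Z, (∏ i, g i (z i)) * log ((∏ i, g i (z i)) / ∏ i, r i (z i)) =
      ∑ j, (∏ i, g i (z i)) * log (g j (z j) / r j (z j)) := by
    intro z
    by_cases hz : ∀ i, g i (z i) ≠ 0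
    · rw [← prod_div_distrib, log_prod fun i _ => div_ne_zero (hz i) (hr i (z i)).ne', mul_sum]
    · obtain ⟨i, hi⟩ := not_forall_not.mp hz
      simp [prod_eq_zero (f := fun i => g i (z i)) (mem_univ i) hi]
  unfold relEntropy
  rw [sum_congr rfl fun z _ => hlog z, sum_comm]
  exact sum_congr rfl fun j _ => sum_prod_apply_mul hg j fun w => log (g j w / r j w)

end Product

lemma sum_comp_eq_sum_card_mul {ι X : Type} [Fintype ι] [Fintype X] [DecidableEq X]
    (xs : ι → X) (D : X → ℝ) :
    ∑ i, D (xs i) = ∑ a, ((univ.filter fun i => xs i = a).card : ℝ) * D a := by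
  rw [← sum_fiberwise univ xs fun i => D (xs i)]
  refine sum_congr rfl fun a _ => ?_
  rw [sum_congr rfl fun i hi => by rw [(mem_filter.mp hi).2], sum_const, nsmul_eq_mul]

section Smoothing

variable {𝒳 𝒵 : Type} [Fintype 𝒳] [Fintype 𝒵] (Q : 𝒳 → 𝒵 → ℝ) (pstar : 𝒳 → ℝ)

noncomputable def smoothedOutput (δ : ℝ) (z : 𝒵) : ℝ :=
  (1 - δ) * ∑ x, pstar x * Q x z + δ / Fintype.card 𝒵

variable {Q pstar}

lemma div_card_le_smoothedOutput (hQ0 : ∀ x z, 0 ≤ Q x z) (hp0 : ∀ x, 0 ≤ pstar x) {δ : ℝ}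
    (hδ1 : δ ≤ 1) (z : 𝒵) : δ / Fintype.card 𝒵 ≤ smoothedOutput Q pstar δ z :=
  le_add_of_nonneg_left <|
    mul_nonneg (sub_nonneg.mpr hδ1) (sum_nonneg fun x _ => mul_nonneg (hp0 x) (hQ0 x z))

lemma smoothedOutput_pos [Nonempty 𝒵] (hQ0 : ∀ x z, 0 ≤ Q x z) (hp0 : ∀ x, 0 ≤ pstar x)
    {δ : ℝ} (hδ0 : 0 < δ) (hδ1 : δ ≤ 1) (z : 𝒵) : 0 < smoothedOutput Q pstar δ z :=
  (div_pos hδ0 (Nat.cast_pos.mpr Fintype.card_pos)).trans_le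
    (div_card_le_smoothedOutput hQ0 hp0 hδ1 z)

lemma sum_smoothedOutput [Nonempty 𝒵] (hQ1 : ∀ x, ∑ z, Q x z = 1) (hp1 : ∑ x, pstar x = 1)
    (δ : ℝ) : ∑ z, smoothedOutput Q pstar δ z = 1 := by
  have hout : ∑ z, ∑ x, pstar x * Q x z = 1 := by
    rw [sum_comm]
    simp only [← mul_sum, hQ1, mul_one, hp1]
  have hcard : (Fintype.card 𝒵 : ℝ) ≠ 0 := Nat.cast_ne_zero.mpr Fintype.card_ne_zero
  simp only [smoothedOutput, sum_add_distrib, ← mul_sum, hout, sum_const, card_univ,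
    nsmul_eq_mul]
  field_simp
  ring

lemma relEntropy_smoothedOutput_le [Nonempty 𝒵] (hQ0 : ∀ x z, 0 ≤ Q x z)
    (hQ1 : ∀ x, ∑ z, Q x z = 1) (hp0 : ∀ x, 0 ≤ pstar x) {δ : ℝ} (hδ0 : 0 < δ) (hδ1 : δ ≤ 1)
    (a : 𝒳) : relEntropy (Q a) (smoothedOutput Q pstar δ) ≤ log (Fintype.card 𝒵) - log δ := by
  have hcard : (0 : ℝ) < Fintype.card 𝒵 := Nat.cast_pos.mpr Fintype.card_pos
  have := relEntropy_le_neg_log (hQ0 a) (hQ1 a) (div_pos hδ0 hcard)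
    (div_card_le_smoothedOutput hQ0 hp0 hδ1)
  rwa [log_div hδ0.ne' hcard.ne', neg_sub] at this

lemma tendsto_sum_mul_relEntropy_smoothedOutput (hQ0 : ∀ x z, 0 ≤ Q x z)
    (hQ1 : ∀ x, ∑ z, Q x z = 1) (hp0 : ∀ x, 0 ≤ pstar x) :
    Tendsto (fun δ => ∑ a, pstar a * relEntropy (Q a) (smoothedOutput Q pstar δ)) (𝓝 0)
      (𝓝 (miJoint fun x z => pstar x * Q x z)) := by
  rw [miJoint_mul_channel pstar hQ1]
  simp only [relEntropy, mul_sum, ← mul_assoc]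
  refine tendsto_finsetSum _ fun a _ => tendsto_finsetSum _ fun z _ => ?_
  rcases (mul_nonneg (hp0 a) (hQ0 a z)).eq_or_lt with h | h
  · simp [← h]
  have hQpos : 0 < Q a z := pos_of_mul_pos_right h (hp0 a)
  have hout : 0 < ∑ x, pstar x * Q x z :=
    h.trans_le (single_le_sum (fun x _ => mul_nonneg (hp0 x) (hQ0 x z)) (mem_univ a))
  have hR : Tendsto (fun δ => smoothedOutput Q pstar δ z) (𝓝 0)
      (𝓝 (∑ x, pstar x * Q x z)) := by
    have : Continuous fun δ => smoothedOutput Q pstar δ z := by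
      unfold smoothedOutput
      fun_prop
    simpa [smoothedOutput] using this.tendsto 0
  exact ((tendsto_const_nhds.div hR hout.ne').log (div_pos hQpos hout).ne').const_mul _

lemma tendsto_mul_sum_relEntropy_smoothedOutput [Nonempty 𝒵] (hQ0 : ∀ x z, 0 ≤ Q x z)
    (hQ1 : ∀ x, ∑ z, Q x z = 1) (hp0 : ∀ x, 0 ≤ pstar x) (hp1 : ∑ x, pstar x = 1) :
    Tendsto (fun δ => δ * ∑ a, relEntropy (Q a) (smoothedOutput Q pstar δ)) (𝓝[>] 0)
      (𝓝 0) := by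
  have hbound : Tendsto
      (fun δ => (Fintype.card 𝒳 : ℝ) * (δ * log (Fintype.card 𝒵) - δ * log δ)) (𝓝[>] 0)
      (𝓝 0) := by
    have : Continuous fun δ => (Fintype.card 𝒳 : ℝ) * (δ * log (Fintype.card 𝒵) - δ * log δ) :=
      continuous_const.mul ((continuous_id.mul continuous_const).sub continuous_mul_log)
    simpa using this.continuousWithinAt.tendsto (s := Set.Ioi 0) (x := 0)
  refine tendsto_of_tendsto_of_tendsto_of_le_of_le' tendsto_const_nhds hbound ?_ ?_
  · filter_upwards [Ioc_mem_nhdsGT one_pos] with δ ⟨hδ0, hδ1⟩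
    refine mul_nonneg hδ0.le (sum_nonneg fun a _ => relEntropy_nonneg (hQ0 a)
      (smoothedOutput_pos hQ0 hp0 hδ0 hδ1) ?_)
    rw [sum_smoothedOutput hQ1 hp1, hQ1 a]
  · filter_upwards [Ioc_mem_nhdsGT one_pos] with δ ⟨hδ0, hδ1⟩
    calc δ * ∑ a, relEntropy (Q a) (smoothedOutput Q pstar δ)
        ≤ δ * ∑ _a : 𝒳, (log (Fintype.card 𝒵) - log δ) := by
          gcongr with a
          exact relEntropy_smoothedOutput_le hQ0 hQ1 hp0 hδ0 hδ1 a
      _ = (Fintype.card 𝒳 : ℝ) * (δ * log (Fintype.card 𝒵) - δ * log δ) := by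
          rw [sum_const, card_univ, nsmul_eq_mul]
          ring

end Smoothing

section Typical

variable {𝒳 𝒵 : Type} [Fintype 𝒳] [DecidableEq 𝒳] [Fintype 𝒵] {Q : 𝒳 → 𝒵 → ℝ}
  {pstar : 𝒳 → ℝ}

lemma card_filter_le_of_mem_typicalSet {n : ℕ} (hn : 0 < n) {xs : Fin n → 𝒳}
    (hxs : xs ∈ typicalSet pstar n) (a : 𝒳) :
    ((univ.filter fun i => xs i = a).card : ℝ) ≤ n * (pstar a + (n : ℝ) ^ (-(1 / 4 : ℝ))) := by
  have h := (abs_le.mp (hxs a)).2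
  rwa [sub_le_iff_le_add', div_le_iff₀ (Nat.cast_pos.mpr hn), mul_comm] at h

lemma relEntropy_pi_le_of_mem_typicalSet {R : 𝒵 → ℝ} (hQ0 : ∀ x z, 0 ≤ Q x z)
    (hQ1 : ∀ x, ∑ z, Q x z = 1) (hR0 : ∀ z, 0 < R z) (hR1 : ∑ z, R z ≤ 1) {n : ℕ}
    (hn : 0 < n) {xs : Fin n → 𝒳} (hxs : xs ∈ typicalSet pstar n) :
    relEntropy (fun zs : Fin n → 𝒵 => ∏ i, Q (xs i) (zs i)) (fun zs => ∏ i, R (zs i)) ≤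
      n * ∑ a, (pstar a + (n : ℝ) ^ (-(1 / 4 : ℝ))) * relEntropy (Q a) R := by
  rw [relEntropy_pi (fun i => hQ1 (xs i)) fun _ => hR0,
    sum_comp_eq_sum_card_mul xs fun a => relEntropy (Q a) R, mul_sum]
  refine sum_le_sum fun a _ => ?_
  rw [← mul_assoc]
  exact mul_le_mul_of_nonneg_right (card_filter_le_of_mem_typicalSet hn hxs a)
    (relEntropy_nonneg (hQ0 a) hR0 (by rwa [hQ1 a]))

end Typical

section Remainder

variable {𝒳 𝒵 : Type} [Fintype 𝒳] [Fintype 𝒵] (Q : 𝒳 → 𝒵 → ℝ) (pstar : 𝒳 → ℝ)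

noncomputable def typicalRemainder (n : ℕ) : ℝ :=
  ∑ a, (pstar a + (n : ℝ) ^ (-(1 / 4 : ℝ))) *
      relEntropy (Q a) (smoothedOutput Q pstar ((n : ℝ) ^ (-(1 / 4 : ℝ)))) -
    miJoint (fun x z => pstar x * Q x z) + 2 / n

variable {Q pstar}

lemma tendsto_typicalRemainder [Nonempty 𝒵] (hQ0 : ∀ x z, 0 ≤ Q x z)
    (hQ1 : ∀ x, ∑ z, Q x z = 1) (hp0 : ∀ x, 0 ≤ pstar x) (hp1 : ∑ x, pstar x = 1) :
    Tendsto (typicalRemainder Q pstar) atTop (𝓝 0) := by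
  have hδ : Tendsto (fun n : ℕ => (n : ℝ) ^ (-(1 / 4 : ℝ))) atTop (𝓝[>] 0) :=
    tendsto_nhdsWithin_iff.mpr
      ⟨(tendsto_rpow_neg_atTop (by norm_num)).comp tendsto_natCast_atTop_atTop,
        (eventually_gt_atTop 0).mono fun n hn => rpow_pos_of_pos (Nat.cast_pos.mpr hn) _⟩
  have hlim := (((tendsto_sum_mul_relEntropy_smoothedOutput hQ0 hQ1 hp0).comp
      (tendsto_nhdsWithin_iff.mp hδ).1).add
    ((tendsto_mul_sum_relEntropy_smoothedOutput hQ0 hQ1 hp0 hp1).comp hδ)).sub_const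
    (miJoint fun x z => pstar x * Q x z) |>.add (tendsto_const_div_atTop_nhds_zero_nat 2)
  simp only [sub_self, add_zero] at hlim
  refine hlim.congr fun n => ?_
  simp only [typicalRemainder, Function.comp_apply, add_mul, sum_add_distrib, mul_sum]

end Remainder

/-- Wyner's Lemma 8: there is a vanishing sequence `f₁(n)` (depending only on the
channel `Q` and the reference distribution `pstar`) such that for every input law
`μX` on `𝒳^n`, with `Z^n` the memoryless output of `Q`,
`(1/n)·I(X^n;Z^n) ≤ I(p*;Q) + P(X^n ∉ T_n)·log|𝒳| + f₁(n)`. -/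
theorem stmt17 {𝒳 𝒵 : Type} [Fintype 𝒳] [DecidableEq 𝒳] [Nonempty 𝒳]
    [Fintype 𝒵] [Nonempty 𝒵]
    (Q : 𝒳 → 𝒵 → ℝ) (hQ0 : ∀ x z, 0 ≤ Q x z) (hQ1 : ∀ x, ∑ z, Q x z = 1)
    (pstar : 𝒳 → ℝ) (hp0 : ∀ x, 0 ≤ pstar x) (hp1 : ∑ x, pstar x = 1) :
    ∃ f₁ : ℕ → ℝ, Filter.Tendsto f₁ Filter.atTop (nhds 0) ∧
      ∀ n : ℕ, 0 < n → ∀ μX : (Fin n → 𝒳) → ℝ,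
        (∀ xs, 0 ≤ μX xs) → (∑ xs, μX xs = 1) →
        (1 / n : ℝ) *
            miJoint (fun (xs : Fin n → 𝒳) (zs : Fin n → 𝒵) =>
              μX xs * ∏ i, Q (xs i) (zs i)) ≤
          miJoint (fun x z => pstar x * Q x z)
            + (∑ xs, Set.indicator ((typicalSet pstar n)ᶜ) μX xs) *
                Real.log (Fintype.card 𝒳)
            + f₁ n := by
  refine ⟨typicalRemainder Q pstar, tendsto_typicalRemainder hQ0 hQ1 hp0 hp1, ?_⟩
  intro n hn μX hμ0 hμ1
  have hn' : (0 : ℝ) < n := Nat.cast_pos.mpr hn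
  set δ : ℝ := (n : ℝ) ^ (-(1 / 4 : ℝ))
  have hδ0 : 0 < δ := rpow_pos_of_pos hn' _
  have hδ1 : δ ≤ 1 := rpow_le_one_of_one_le_of_nonpos (Nat.one_le_cast.mpr hn) (by norm_num)
  set R := smoothedOutput Q pstar δ
  have hR0 : ∀ z, 0 < R z := smoothedOutput_pos hQ0 hp0 hδ0 hδ1
  have hR1 : ∑ z, R z = 1 := sum_smoothedOutput hQ1 hp1 δ
  have hC : 0 ≤ n * ∑ a, (pstar a + δ) * relEntropy (Q a) R :=
    mul_nonneg hn'.le <| sum_nonneg fun a _ => mul_nonneg (add_nonneg (hp0 a) hδ0.le)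
      (relEntropy_nonneg (hQ0 a) hR0 (by rw [hR1, hQ1 a]))
  have key := miJoint_le_of_relEntropy_le_on hμ0 hμ1
    (fun xs zs => prod_nonneg fun i _ => hQ0 (xs i) (zs i))
    (fun xs => sum_prod_apply_eq_one fun i => hQ1 (xs i))
    (fun zs => prod_pos fun i _ => hR0 (zs i)) (sum_prod_apply_eq_one fun _ => hR1) hC
    fun xs hxs => relEntropy_pi_le_of_mem_typicalSet hQ0 hQ1 hR0 hR1.le hn hxs
  rw [Fintype.card_fun, Fintype.card_fin, Nat.cast_pow, log_pow] at key
  calc (1 / n : ℝ) * miJoint (fun (xs : Fin n → 𝒳) (zs : Fin n → 𝒵) =>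
        μX xs * ∏ i, Q (xs i) (zs i))
      ≤ (1 / n : ℝ) * (n * ∑ a, (pstar a + δ) * relEntropy (Q a) R +
          (∑ xs, ((typicalSet pstar n)ᶜ).indicator μX xs) * (n * log (Fintype.card 𝒳)) + 2) := by
        gcongr
    _ = _ := by
        unfold typicalRemainder
        field_simp
        ring
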